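/- The infinite-state bakery system (Example 3) is observationally equivalent to the finite nine-state system obtained by distillation (Figure 9): for every event stream es and every position n, the pair of process components of the bakery trace σ n equals O(τ n), where τ is the trace of es under the finite transition function stepF from initial state f1 and O is the output map of the finite system. -/

import Mathlib

inductive ProcState : Type where
  | T | W | U
deriving DecidableEq

inductive Event : Type where
  | request1 | request2 | take1 | take2 | release1 | release2
deriving DecidableEq

/-- The trace of an event stream under a transition function from an initial state. -/
def trace {S : Type} (step : Event → S → S) (s0 : S) (es : ℕ → Event) : ℕ → S
  | 0 => s0
  | n + 1 => step (es n) (trace step s0 es n)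

/-- An event stream is fair if every event occurs infinitely often. -/
def Fair (es : ℕ → Event) : Prop := ∀ (e : Event) (n : ℕ), ∃ m, n ≤ m ∧ es m = e

/-- Transition function of Example 3 (Lamport's bakery algorithm for two processes).
The state is `(s1, s2, t1, t2)` where `t1`, `t2` are the ticket numbers. -/
def step3 : Event → ProcState × ProcState × ℕ × ℕ → ProcState × ProcState × ℕ × ℕ
  | .request1, (s1, s2, t1, t2) =>
      if s1 = ProcState.T then (.W, s2, t2 + 1, t2) else (s1, s2, t1, t2)
  | .request2, (s1, s2, t1, t2) =>
      if s2 = ProcState.T then (s1, .W, t1, t1 + 1) else (s1, s2, t1, t2)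
  | .take1, (s1, s2, t1, t2) =>
      if s1 = ProcState.W ∧ (s2 = ProcState.T ∨ t1 < t2) then (.U, s2, t1, t2)
      else (s1, s2, t1, t2)
  | .take2, (s1, s2, t1, t2) =>
      if s2 = ProcState.W ∧ (s1 = ProcState.T ∨ t2 < t1) then (s1, .U, t1, t2)
      else (s1, s2, t1, t2)
  | .release1, (s1, s2, t1, t2) =>
      if s1 = ProcState.U then (.T, s2, 0, t2) else (s1, s2, t1, t2)
  | .release2, (s1, s2, t1, t2) =>
      if s2 = ProcState.U then (s1, .T, t1, 0) else (s1, s2, t1, t2)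

/-- States of the finite nine-state system obtained by distilling Example 3. -/
inductive FState : Type where
  | f1 | f2 | f3 | f4 | f5 | f6 | f7 | f8 | f9
deriving DecidableEq

/-- Transition function of the finite distilled system (Figure 9); every
(event, state) pair not listed leaves the state unchanged. -/
def stepF : Event → FState → FState
  | .request1, .f1 => .f2
  | .request2, .f1 => .f3
  | .take1,    .f2 => .f4
  | .request2, .f2 => .f6
  | .take2,    .f3 => .f5
  | .request1, .f3 => .f7
  | .release1, .f4 => .f1
  | .request2, .f4 => .f8
  | .release2, .f5 => .f1
  | .request1, .f5 => .f9
  | .take1,    .f6 => .f8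
  | .take2,    .f7 => .f9
  | .release1, .f8 => .f3
  | .release2, .f9 => .f2
  | _, s => s

/-- Output map of the finite distilled system. -/
def O : FState → ProcState × ProcState
  | .f1 => (.T, .T)
  | .f2 => (.W, .T)
  | .f3 => (.T, .W)
  | .f4 => (.U, .T)
  | .f5 => (.T, .U)
  | .f6 => (.W, .W)
  | .f7 => (.W, .W)
  | .f8 => (.U, .W)
  | .f9 => (.W, .U)

/-! The distilled state records the observable pair of the bakery state and, whenever both
processes compete (`f6`–`f9`), which of them holds the smaller ticket. That is exactly what the
guards of `take1` and `take2` consult, so the correspondence survives every event. -/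

theorem trace_rel_of_rel_step {S S' : Type} {step : Event → S → S} {step' : Event → S' → S'}
    {R : S → S' → Prop} {s₀ : S} {s₀' : S'} (h₀ : R s₀ s₀')
    (hstep : ∀ e s s', R s s' → R (step e s) (step' e s')) (es : ℕ → Event) (n : ℕ) :
    R (trace step s₀ es n) (trace step' s₀' es n) := by
  induction n with
  | zero => exact h₀
  | succ n ih => exact hstep (es n) _ _ ih

def ticketOrder : FState → ℕ → ℕ → Prop
  | .f6 | .f8 => fun t₁ t₂ => t₁ < t₂
  | .f7 | .f9 => fun t₁ t₂ => t₂ < t₁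
  | _ => fun _ _ => True

def Abstracts (f : FState) (s : ProcState × ProcState × ℕ × ℕ) : Prop :=
  (s.1, s.2.1) = O f ∧ ticketOrder f s.2.2.1 s.2.2.2

theorem abstracts_step {f : FState} {s : ProcState × ProcState × ℕ × ℕ} (e : Event)
    (h : Abstracts f s) : Abstracts (stepF e f) (step3 e s) := by
  obtain ⟨s₁, s₂, t₁, t₂⟩ := s
  -- `lt_asymm` blocks the `take` of the waiting process holding the larger ticket.
  cases f <;> cases e <;> simp_all [Abstracts, ticketOrder, step3, stepF, O, lt_asymm]

/-- The infinite-state bakery system is observationally equivalent to the finite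
nine-state system obtained by distillation. -/
theorem bakery_observationally_equivalent_to_distilled :
    ∀ (es : ℕ → Event) (n : ℕ),
      ((trace step3 (ProcState.T, ProcState.T, 0, 0) es n).1,
        (trace step3 (ProcState.T, ProcState.T, 0, 0) es n).2.1) =
      O (trace stepF FState.f1 es n) := fun es n =>
  (trace_rel_of_rel_step (R := Abstracts) (s₀ := .f1) ⟨rfl, trivial⟩
    (fun e _ _ => abstracts_step e) es n).1
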